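/- Reduction of balanced session environments preserves balancedness: if Δ is balanced and Δ → Δ' via the session-environment reduction rule (which simultaneously consumes a matching output prefix on s and input prefix on s̄), then Δ' is balanced. -/
import Mathlib


/-- Recursion-free session types: `end`, output `!U.S`, input `?U.S`. -/
inductive SType (α : Type) : Type where
  | end_ : SType α
  | out  : α → SType α → SType α
  | inp  : α → SType α → SType α

/-- Structural duality: swaps inputs and outputs. -/
def dual {α : Type} : SType α → SType α
  | .end_ => .end_
  | .out U S => .inp U (dual S)
  | .inp U S => .out U (dual S)

/-- A session environment is balanced when the types of dual endpoints are
dual to each other. -/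
def BalancedEnv {Name α : Type} (bar : Name → Name)
    (Δ : Name → Option (SType α)) : Prop :=
  ∀ s S T, Δ s = some S → Δ (bar s) = some T → T = dual S

/-- Session-environment reduction: a matching output prefix on `s` and input
prefix on `s̄` are simultaneously consumed. -/
def EnvRed {Name α : Type} [DecidableEq Name] (bar : Name → Name)
    (Δ Δ' : Name → Option (SType α)) : Prop :=
  ∃ (Δ0 : Name → Option (SType α)) (s : Name) (U : α) (S1 S2 : SType α),
    Δ0 s = none ∧ Δ0 (bar s) = none ∧ bar s ≠ s ∧
    Δ = Function.update (Function.update Δ0 s (some (SType.out U S1)))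
          (bar s) (some (SType.inp U S2)) ∧
    Δ' = Function.update (Function.update Δ0 s (some S1)) (bar s) (some S2)


lemma dual_dual {α : Type} (S : SType α) : dual (dual S) = S := by
  induction S with
  | end_ => rfl
  | out U S ih => simp [dual, ih]
  | inp U S ih => simp [dual, ih]

/-- Reduction of balanced session environments preserves balancedness. -/
theorem balanced_preserved_by_reduction {Name α : Type} [DecidableEq Name]
    (bar : Name → Name) (hbar : ∀ n, bar (bar n) = n)
    (Δ Δ' : Name → Option (SType α))
    (hbal : BalancedEnv bar Δ) (hred : EnvRed bar Δ Δ') :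
    BalancedEnv bar Δ' := by
  obtain ⟨Δ0, s, U, S1, S2, h1, h2, hne, hΔ, hΔ'⟩ := hred
  have hΔs : Δ s = some (SType.out U S1) := by
    simp [hΔ, Function.update, Ne.symm hne]
  have hΔbs : Δ (bar s) = some (SType.inp U S2) := by
    simp [hΔ, Function.update]
  have hS2 : S2 = dual S1 := by
    have := hbal s _ _ hΔs hΔbs
    simpa [dual] using this
  intro t S T hS hT
  by_cases hts : t = s
  · subst hts
    rw [hΔ'] at hS hT
    simp [Function.update, Ne.symm hne] at hS
    simp [Function.update] at hT
    rw [← hS, ← hT, hS2]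
  · by_cases htbs : t = bar s
    · subst htbs
      rw [hΔ'] at hS hT
      rw [hbar] at hT
      simp [Function.update] at hS
      simp [Function.update, Ne.symm hne] at hT
      rw [← hS, ← hT, hS2, dual_dual]
    · have hbt1 : bar t ≠ s := fun h => htbs (by rw [← h, hbar])
      have hbt2 : bar t ≠ bar s := fun h => hts (by
        have := congrArg bar h; rwa [hbar, hbar] at this)
      have e1 : Δ' t = Δ t := by
        rw [hΔ', hΔ]; simp [Function.update, hts, htbs]
      have e2 : Δ' (bar t) = Δ (bar t) := by
        rw [hΔ', hΔ]; simp [Function.update, hbt1, hbt2]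
      exact hbal t S T (e1 ▸ hS) (e2 ▸ hT)
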